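/- arXiv:2003.14322 — 2 statements merged into one kernel-verified Lean document; each statement's English description precedes it below -/
import Mathlib

section
/- Let H = (C,F,D,G) be a hybrid system on ℝⁿ satisfying the hybrid basic conditions, let (S,I,O) be compact sets with S ⊆ C ∪ D, I ⊆ int(S), O ⊆ int(S) and int(O) ≠ ∅, let V be a Lyapunov barrier function w.r.t. (S,I,O) and H with constants γ_c, γ_d > 0, and let β ∈ ℝ be such that, with B := {s ∈ O : V(s) ≤ β}, O* := O \ int(B), O*_C := O* ∩ C, O*_D := O* ∩ D: (a) G(s) ⊆ S for all s ∈ O*_D; (b) ⟨∇V(s), f⟩ ≤ −γ_c for all s ∈ O*_C and all f ∈ F(s); (c) V(g) − V(s) ≤ −γ_d for all s ∈ O*_D and all g ∈ G(s); (d) V(s) > β for all s ∈ ∂O; (e) G(s) ⊆ B for all s ∈ B ∩ D. If in addition B ∩ D = ∅, then every maximal solution φ : E → ℝⁿ of H with φ(0,0) ∈ I is non-Zeno, i.e. it is not the case that E is unbounded and sup{t : ∃ j, (t,j) ∈ E} < ∞. -/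
open Set MeasureTheory Filter Topology RealInnerProductSpace

noncomputable section

/-- A function `φ` is absolutely continuous on `[a, b]` with (a.e.) derivative `φ'`,
encoded via the fundamental theorem of calculus characterization. -/
def IsACDeriv {X : Type*} [NormedAddCommGroup X] [NormedSpace ℝ X]
    (φ φ' : ℝ → X) (a b : ℝ) : Prop :=
  IntervalIntegrable φ' volume a b ∧ ∀ t ∈ Set.Icc a b, φ t = φ a + ∫ s in a..t, φ' s

/-- A compact hybrid time domain: `⋃_{j=0}^{J-1} [t_j, t_{j+1}] × {j}`
for reals `0 = t_0 ≤ t_1 ≤ ⋯ ≤ t_J`. -/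
def IsCompactHybridTimeDomain (E : Set (ℝ × ℕ)) : Prop :=
  ∃ (J : ℕ) (τ : ℕ → ℝ), τ 0 = 0 ∧ (∀ j < J, τ j ≤ τ (j + 1)) ∧
    E = ⋃ j ∈ Finset.range J, Set.Icc (τ j) (τ (j + 1)) ×ˢ ({j} : Set ℕ)

/-- A hybrid time domain: a subset of `ℝ≥0 × ℕ` all of whose truncations
`E ∩ ([0,T] × {0,…,J})`, for `(T,J) ∈ E`, are compact hybrid time domains. -/
def IsHybridTimeDomain (E : Set (ℝ × ℕ)) : Prop :=
  (∀ p ∈ E, 0 ≤ p.1) ∧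
  ∀ T : ℝ, ∀ J : ℕ, (T, J) ∈ E →
    IsCompactHybridTimeDomain (E ∩ Set.Icc 0 T ×ˢ {j : ℕ | j ≤ J})

/-- A hybrid system `(C, F, D, G)`: flow set, flow map, jump set, jump map. -/
structure HybridSystem (X : Type*) where
  C : Set X
  F : X → Set X
  D : Set X
  G : X → Set X

/-- `φ : E → X` is a solution of the hybrid system `H`. -/
def HybridSolution {X : Type*} [NormedAddCommGroup X] [NormedSpace ℝ X]
    (H : HybridSystem X) (E : Set (ℝ × ℕ)) (φ : ℝ → ℕ → X) : Prop :=
  IsHybridTimeDomain E ∧ (0, 0) ∈ E ∧ φ 0 0 ∈ H.C ∪ H.D ∧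
  (∀ j : ℕ, ∃ φ' : ℝ → X,
    (∀ a b : ℝ, a ≤ b → Set.Icc a b ⊆ {t | (t, j) ∈ E} →
      IsACDeriv (fun t => φ t j) φ' a b) ∧
    (∀ᵐ t ∂(volume.restrict {t | (t, j) ∈ E}),
      φ t j ∈ H.C ∧ φ' t ∈ H.F (φ t j))) ∧
  (∀ t : ℝ, ∀ j : ℕ, (t, j) ∈ E → (t, j + 1) ∈ E →
    φ t j ∈ H.D ∧ φ t (j + 1) ∈ H.G (φ t j))

/-- A maximal solution: a solution which cannot be extended to a solution on a
strictly larger hybrid time domain. -/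
def MaximalSolution {X : Type*} [NormedAddCommGroup X] [NormedSpace ℝ X]
    (H : HybridSystem X) (E : Set (ℝ × ℕ)) (φ : ℝ → ℕ → X) : Prop :=
  HybridSolution H E φ ∧
  ¬ ∃ (E' : Set (ℝ × ℕ)) (ψ : ℝ → ℕ → X), HybridSolution H E' ψ ∧ E ⊂ E' ∧
      ∀ p ∈ E, ψ p.1 p.2 = φ p.1 p.2

/-- Outer semicontinuity of a set-valued map relative to a set `C`. -/
def OuterSemicontinuousRel {X : Type*} [TopologicalSpace X]
    (F : X → Set X) (C : Set X) : Prop :=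
  ∀ x ∈ C, ∀ xs : ℕ → X, ∀ ys : ℕ → X,
    (∀ i, xs i ∈ C) → Tendsto xs atTop (𝓝 x) →
    (∀ i, ys i ∈ F (xs i)) → ∀ y : X, Tendsto ys atTop (𝓝 y) → y ∈ F x

/-- Local boundedness of a set-valued map relative to a set `C`. -/
def LocallyBoundedRel {X : Type*} [TopologicalSpace X] [Bornology X]
    (F : X → Set X) (C : Set X) : Prop :=
  ∀ x ∈ C, ∃ U ∈ 𝓝 x, Bornology.IsBounded (⋃ y ∈ U ∩ C, F y)

/-- The hybrid basic conditions. -/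
def HybridBasicConditions {X : Type*} [NormedAddCommGroup X] [NormedSpace ℝ X]
    (H : HybridSystem X) : Prop :=
  IsClosed H.C ∧ IsClosed H.D ∧
  OuterSemicontinuousRel H.F H.C ∧ LocallyBoundedRel H.F H.C ∧
  H.C ⊆ {x | (H.F x).Nonempty} ∧ (∀ x ∈ H.C, Convex ℝ (H.F x)) ∧
  OuterSemicontinuousRel H.G H.D ∧ LocallyBoundedRel H.G H.D ∧
  H.D ⊆ {x | (H.G x).Nonempty}

/-- Lyapunov barrier function conditions with explicit rates `γc, γd > 0`. -/
def IsLBFWith {X : Type*} [NormedAddCommGroup X] [InnerProductSpace ℝ X] [CompleteSpace X]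
    (H : HybridSystem X) (S I O : Set X) (V : X → ℝ) (γc γd : ℝ) : Prop :=
  0 < γc ∧ 0 < γd ∧
  (∀ s ∈ I, V s ≤ 0) ∧
  (∀ s ∈ frontier S, 0 < V s) ∧
  (∀ s ∈ ({s ∈ S | V s ≤ 0} \ O) ∩ H.D, H.G s ⊆ S) ∧
  (∀ s ∈ ({s ∈ S | V s ≤ 0} \ O) ∩ H.C, ∀ f ∈ H.F s, ⟪gradient V s, f⟫ ≤ -γc) ∧
  (∀ s ∈ ({s ∈ S | V s ≤ 0} \ O) ∩ H.D, ∀ g ∈ H.G s, V g - V s ≤ -γd)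

set_option linter.unusedSectionVars false
set_option maxHeartbeats 1000000

section ZenoAux
variable {X : Type*} [NormedAddCommGroup X] [InnerProductSpace ℝ X] [ProperSpace X]
  [CompleteSpace X]

lemma usc_of_osc {F : X → Set X} {C : Set X} (hosc : OuterSemicontinuousRel F C)
    (hlb : LocallyBoundedRel F C) {x : X} (hx : x ∈ C) {ε : ℝ} (hε : 0 < ε) :
    ∃ δ > 0, ∀ y ∈ C, dist y x < δ → ∀ f ∈ F y, ∃ f₀ ∈ F x, dist f f₀ < ε := by
  by_contra hcon
  push_neg at hcon
  obtain ⟨U, hU, hUb⟩ := hlb x hx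
  obtain ⟨r, hr, hball⟩ := Metric.mem_nhds_iff.1 hU
  have h' : ∀ k : ℕ, ∃ y, y ∈ C ∧ dist y x < min r (1 / (k + 1)) ∧
      ∃ f ∈ F y, ∀ f₀ ∈ F x, ε ≤ dist f f₀ := by
    intro k
    have hpos : (0:ℝ) < min r (1 / (k + 1)) := lt_min hr (by positivity)
    obtain ⟨y, hyC, hyd, f, hfF, hfar⟩ := hcon (min r (1 / (k + 1))) hpos
    exact ⟨y, hyC, hyd, f, hfF, hfar⟩
  choose y hyC hyd f hfF hfar using h'
  have hyU : ∀ k, y k ∈ U ∩ C := fun k =>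
    ⟨hball (Metric.mem_ball.2 ((hyd k).trans_le (min_le_left _ _))), hyC k⟩
  have hfB : ∀ k, f k ∈ ⋃ z ∈ U ∩ C, F z := fun k => mem_biUnion (hyU k) (hfF k)
  obtain ⟨a, -, σ, hσ, ha⟩ := tendsto_subseq_of_bounded hUb hfB
  have hy0 : Tendsto (fun k : ℕ => y k) atTop (𝓝 x) := by
    rw [tendsto_iff_dist_tendsto_zero]
    refine squeeze_zero (fun k => dist_nonneg)
      (fun k => ((hyd k).trans_le (min_le_right _ _)).le) ?_
    exact tendsto_one_div_add_atTop_nhds_zero_nat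
  have hyx : Tendsto (fun k => y (σ k)) atTop (𝓝 x) := hy0.comp hσ.tendsto_atTop
  have haF : a ∈ F x :=
    hosc x hx _ _ (fun k => hyC (σ k)) hyx (fun k => hfF (σ k)) a ha
  have hda : Tendsto (fun k => dist (f (σ k)) a) atTop (𝓝 0) :=
    tendsto_iff_dist_tendsto_zero.1 ha
  obtain ⟨k, hk⟩ := (hda.eventually (gt_mem_nhds hε)).exists
  exact absurd hk (not_lt.2 (hfar (σ k) a haF))

lemma contOn_of_acderiv {ψ ψ' : ℝ → X} {c d : ℝ} (hcd : c ≤ d)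
    (h : IsACDeriv ψ ψ' c d) : ContinuousOn ψ (Icc c d) := by
  have h1 : ContinuousOn (fun t => ψ c + ∫ s in c..t, ψ' s) (Icc c d) := by
    refine continuousOn_const.add ?_
    have h2 := intervalIntegral.continuousOn_primitive_interval' h.1 left_mem_uIcc
    rwa [uIcc_of_le hcd] at h2
  exact h1.congr h.2

lemma mem_of_ae_mem {C : Set X} (hC : IsClosed C)
    {ψ : ℝ → X} {c d : ℝ} (hcd : c < d) (hcont : ContinuousOn ψ (Icc c d))
    (hae : ∀ᵐ t ∂volume.restrict (Icc c d), ψ t ∈ C) :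
    ∀ t ∈ Icc c d, ψ t ∈ C := by
  intro t ht
  by_contra htC
  obtain ⟨ε, hε, hballC⟩ := Metric.isOpen_iff.1 hC.isOpen_compl _ htC
  obtain ⟨δ, hδ, hδ'⟩ := Metric.continuousWithinAt_iff.1 (hcont t ht) ε hε
  set a := max c (t - δ / 2) with ha
  set b := min d (t + δ / 2) with hb
  have hab : a < b := by
    rw [ha, hb]
    apply max_lt <;> apply lt_min
    · exact hcd
    · linarith [ht.1]
    · linarith [ht.2]
    · linarith
  have hsub : Icc a b ⊆ Icc c d := Icc_subset_Icc (le_max_left _ _) (min_le_left _ _)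
  have hnear : ∀ s ∈ Icc a b, ψ s ∉ C := by
    intro s hs
    have h1 : dist s t < δ := by
      rw [Real.dist_eq, abs_sub_lt_iff]
      constructor
      · linarith [hs.2, min_le_right d (t + δ / 2)]
      · linarith [hs.1, le_max_right c (t - δ / 2)]
    exact hballC (hδ' (hsub hs) h1)
  have h0 : volume.restrict (Icc c d) {s : ℝ | ¬ ψ s ∈ C} = 0 := hae
  have h1 : volume.restrict (Icc c d) (Icc a b) = 0 :=
    le_antisymm (h0 ▸ measure_mono fun s hs => hnear s hs) (by simp)
  rw [Measure.restrict_apply measurableSet_Icc, inter_eq_left.2 hsub,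
    Real.volume_Icc] at h1
  exact absurd h1 (by simp [ENNReal.ofReal_eq_zero]; linarith)

lemma inner_gradient_eq {V : X → ℝ} {pt w : X} :
    ⟪gradient V pt, w⟫ = fderiv ℝ V pt w :=
  InnerProductSpace.toDual_symm_apply

lemma IntervalIntegrable.clm_comp {Y : Type*} [NormedAddCommGroup Y] [NormedSpace ℝ Y]
    {f : ℝ → X} {a b : ℝ} (L : X →L[ℝ] Y) (h : IntervalIntegrable f volume a b) :
    IntervalIntegrable (fun x => L (f x)) volume a b :=
  ⟨L.integrable_comp h.1, L.integrable_comp h.2⟩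

lemma loc_decrease {F : X → Set X} {C : Set X}
    (hosc : OuterSemicontinuousRel F C) (hlb : LocallyBoundedRel F C)
    {V : X → ℝ} (hV : ContDiff ℝ 1 V) {γ : ℝ} (hγ : 0 < γ)
    {ψ ψ' : ℝ → X} {T d : ℝ} (hTd : T < d)
    (hAC : ∀ a b : ℝ, a ≤ b → Icc a b ⊆ Icc T d → IsACDeriv ψ ψ' a b)
    (hae : ∀ᵐ t ∂volume.restrict (Icc T d), ψ t ∈ C ∧ ψ' t ∈ F (ψ t))
    (hxC : ψ T ∈ C) (hFx : ∀ f ∈ F (ψ T), ⟪gradient V (ψ T), f⟫ ≤ -γ) :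
    ∃ e ∈ Ioc T d, ∀ t ∈ Icc T e, V (ψ t) ≤ V (ψ T) - γ / 2 * (t - T) := by
  set x := ψ T with hxdef
  obtain ⟨U, hU, hUb⟩ := hlb x hxC
  obtain ⟨M, hM⟩ := isBounded_iff_forall_norm_le.1 hUb
  set M0 : ℝ := max M 0 with hM0def
  have hM0 : 0 ≤ M0 := le_max_right _ _
  set K : ℝ := ‖gradient V x‖ with hKdef
  have hK : 0 ≤ K := norm_nonneg _
  set η : ℝ := γ / (4 * (M0 + 1)) with hηdef
  set η' : ℝ := γ / (4 * (K + 1)) with hη'def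
  have hη : 0 < η := by rw [hηdef]; positivity
  have hη' : 0 < η' := by rw [hη'def]; positivity
  have hKη' : K * η' ≤ γ / 4 := by
    rw [hη'def, mul_div_assoc']
    rw [div_le_div_iff₀ (by positivity) (by norm_num : (0:ℝ) < 4)]
    nlinarith
  have hηM0 : η * M0 ≤ γ / 4 := by
    rw [hηdef, div_mul_eq_mul_div]
    rw [div_le_div_iff₀ (by positivity) (by norm_num : (0:ℝ) < 4)]
    nlinarith
  obtain ⟨δF, hδF, hFnear⟩ := usc_of_osc hosc hlb hxC hη'
  have hgradcont : Continuous fun y => gradient V y := by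
    have h1 : Continuous (fderiv ℝ V) := hV.continuous_fderiv one_ne_zero
    exact (InnerProductSpace.toDual ℝ X).symm.continuous.comp h1
  obtain ⟨ρ, hρ, hgrad⟩ := Metric.continuousAt_iff.1 (hgradcont.continuousAt : ContinuousAt _ x) η hη
  obtain ⟨rU, hrU, hballU⟩ := Metric.mem_nhds_iff.1 hU
  set r : ℝ := min δF (min ρ rU) with hrdef
  have hr : 0 < r := lt_min hδF (lt_min hρ hrU)
  have hcont : ContinuousOn ψ (Icc T d) := contOn_of_acderiv hTd.le (hAC T d hTd.le subset_rfl)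
  obtain ⟨δ, hδ, hδ'⟩ :=
    Metric.continuousWithinAt_iff.1 (hcont T (left_mem_Icc.2 hTd.le)) r hr
  set e : ℝ := min (T + δ / 2) d with hedef
  have heT : T < e := lt_min (by linarith) hTd
  have hed : e ≤ d := min_le_right _ _
  have hsub : Icc T e ⊆ Icc T d := Icc_subset_Icc le_rfl hed
  have hballmem : ∀ s ∈ Icc T e, dist (ψ s) x < r := by
    intro s hs
    refine hδ' (hsub hs) ?_
    rw [Real.dist_eq, abs_sub_lt_iff]
    constructor
    · have := hs.2
      have h2 : e ≤ T + δ / 2 := min_le_left _ _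
      linarith
    · linarith [hs.1]
  refine ⟨e, ⟨heT, hed⟩, ?_⟩
  intro t ht
  rcases eq_or_lt_of_le ht.1 with h | hTt
  · rw [← h]; simp [hxdef]
  have hte : Icc T t ⊆ Icc T d := Icc_subset_Icc le_rfl (ht.2.trans hed)
  have hAE : ∀ᵐ s ∂volume.restrict (Icc T t), ψ s ∈ C ∧ ψ' s ∈ F (ψ s) :=
    ae_restrict_of_ae_restrict_of_subset hte hae
  have hint : IntervalIntegrable ψ' volume T t := (hAC T t ht.1 hte).1
  have key : ∀ᵐ s ∂volume.restrict (Icc T t),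
      ‖ψ' s‖ ≤ M0 ∧ ⟪gradient V x, ψ' s⟫ ≤ -γ + γ / 4 := by
    filter_upwards [hAE, ae_restrict_mem measurableSet_Icc] with s hs hsI
    obtain ⟨hsC, hsF⟩ := hs
    have hsx : dist (ψ s) x < r := hballmem s ⟨hsI.1, hsI.2.trans ht.2⟩
    have hU' : ψ s ∈ U := hballU (Metric.mem_ball.2
      (hsx.trans_le ((min_le_right _ _).trans (min_le_right _ _))))
    constructor
    · exact (hM _ (mem_biUnion ⟨hU', hsC⟩ hsF)).trans (le_max_left _ _)
    · obtain ⟨f₀, hf₀, hdist⟩ := hFnear (ψ s) hsC (hsx.trans_le (min_le_left _ _)) (ψ' s) hsF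
      have h1 : ⟪gradient V x, ψ' s⟫ - ⟪gradient V x, f₀⟫ = ⟪gradient V x, ψ' s - f₀⟫ :=
        (inner_sub_right _ _ _).symm
      have h2 : ⟪gradient V x, ψ' s - f₀⟫ ≤ K * η' := by
        refine (real_inner_le_norm _ _).trans ?_
        rw [hKdef]
        have : ‖ψ' s - f₀‖ ≤ η' := by
          rw [← dist_eq_norm]; exact hdist.le
        exact mul_le_mul_of_nonneg_left this (norm_nonneg _)
      have h3 : ⟪gradient V x, f₀⟫ ≤ -γ := hFx f₀ hf₀
      linarith
  set w : X := ψ t - x with hwdef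
  have hw : w = ∫ s in T..t, ψ' s := by
    rw [hwdef]
    have := (hAC T t ht.1 hte).2 t ⟨ht.1, le_rfl⟩
    rw [this]; abel
  have h3 : ‖w‖ ≤ M0 * (t - T) := by
    rw [hw]
    calc ‖∫ s in T..t, ψ' s‖ ≤ ∫ s in T..t, ‖ψ' s‖ :=
          intervalIntegral.norm_integral_le_integral_norm ht.1
      _ ≤ ∫ _ in T..t, M0 := by
          refine intervalIntegral.integral_mono_ae_restrict ht.1 hint.norm
            intervalIntegrable_const ?_
          filter_upwards [key] with s hs using hs.1
      _ = M0 * (t - T) := by simp [mul_comm]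
  have h4 : (∫ s in T..t, ⟪gradient V x, ψ' s⟫) ≤ (-γ + γ / 4) * (t - T) := by
    have hii : IntervalIntegrable (fun s => ⟪gradient V x, ψ' s⟫) volume T t := by
      have := hint.clm_comp (innerSL ℝ (gradient V x))
      simpa using this
    calc (∫ s in T..t, ⟪gradient V x, ψ' s⟫) ≤ ∫ _ in T..t, (-γ + γ / 4) := by
          refine intervalIntegral.integral_mono_ae_restrict ht.1 hii
            intervalIntegrable_const ?_
          filter_upwards [key] with s hs using hs.2
      _ = (-γ + γ / 4) * (t - T) := by simp; ring
  have h5 : ⟪gradient V x, w⟫ = ∫ s in T..t, ⟪gradient V x, ψ' s⟫ := by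
    rw [hw]
    have := (innerSL ℝ (gradient V x)).intervalIntegral_comp_comm hint
    simpa using this.symm
  -- segment FTC
  have hseg : ∀ s ∈ Icc (0:ℝ) 1,
      HasDerivAt (fun u : ℝ => V (x + u • w)) ⟪gradient V (x + s • w), w⟫ s := by
    intro s _
    have hdiff : DifferentiableAt ℝ V (x + s • w) :=
      (hV.differentiable one_ne_zero).differentiableAt
    have h1 : HasDerivAt (fun u : ℝ => x + u • w) w s := by
      simpa using ((hasDerivAt_id s).smul_const w).const_add x
    have h2 := hdiff.hasFDerivAt.comp_hasDerivAt s h1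
    rwa [show fderiv ℝ V (x + s • w) w = ⟪gradient V (x + s • w), w⟫ from
      inner_gradient_eq.symm] at h2
  have hcont' : Continuous fun s : ℝ => ⟪gradient V (x + s • w), w⟫ := by
    refine Continuous.inner (hgradcont.comp ?_) continuous_const
    exact continuous_const.add (continuous_id.smul continuous_const)
  have hFTC : V (ψ t) - V x = ∫ s in (0:ℝ)..1, ⟪gradient V (x + s • w), w⟫ := by
    have h6 := intervalIntegral.integral_eq_sub_of_hasDerivAt
      (f := fun u : ℝ => V (x + u • w))
      (f' := fun s => ⟪gradient V (x + s • w), w⟫)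
      (fun s hs => hseg s (by rwa [uIcc_of_le zero_le_one] at hs))
      (hcont'.intervalIntegrable _ _)
    rw [h6]
    norm_num [hwdef]
  have hbnd : ∀ s ∈ Icc (0:ℝ) 1,
      ⟪gradient V (x + s • w), w⟫ ≤ ⟪gradient V x, w⟫ + η * ‖w‖ := by
    intro s hs
    have hnw : ‖w‖ < r := by
      have := hballmem t ht
      rwa [dist_eq_norm] at this
    have hptball : dist (x + s • w) x < ρ := by
      rw [dist_eq_norm, add_sub_cancel_left, norm_smul, Real.norm_eq_abs,
        abs_of_nonneg hs.1]
      calc s * ‖w‖ ≤ 1 * ‖w‖ := mul_le_mul_of_nonneg_right hs.2 (norm_nonneg _)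
        _ = ‖w‖ := one_mul _
        _ < ρ := hnw.trans_le ((min_le_right _ _).trans (min_le_left _ _))
    have hgd := hgrad hptball
    have h1 : ⟪gradient V (x + s • w), w⟫ - ⟪gradient V x, w⟫
        = ⟪gradient V (x + s • w) - gradient V x, w⟫ := (inner_sub_left _ _ _).symm
    have h2 : ⟪gradient V (x + s • w) - gradient V x, w⟫ ≤ η * ‖w‖ := by
      refine (real_inner_le_norm _ _).trans ?_
      refine mul_le_mul_of_nonneg_right ?_ (norm_nonneg _)
      rw [← dist_eq_norm]; exact hgd.le
    linarith
  have h6 : V (ψ t) - V x ≤ ⟪gradient V x, w⟫ + η * ‖w‖ := by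
    rw [hFTC]
    calc (∫ s in (0:ℝ)..1, ⟪gradient V (x + s • w), w⟫)
        ≤ ∫ _ in (0:ℝ)..1, (⟪gradient V x, w⟫ + η * ‖w‖) :=
          intervalIntegral.integral_mono_on zero_le_one
            (hcont'.intervalIntegrable _ _) intervalIntegrable_const hbnd
      _ = ⟪gradient V x, w⟫ + η * ‖w‖ := by simp
  have h7 : ⟪gradient V x, w⟫ ≤ (-γ + γ / 4) * (t - T) := by rw [h5]; exact h4
  have h8 : η * ‖w‖ ≤ η * (M0 * (t - T)) := mul_le_mul_of_nonneg_left h3 hη.le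
  have h9 : η * (M0 * (t - T)) ≤ γ / 4 * (t - T) := by
    rw [← mul_assoc]
    exact mul_le_mul_of_nonneg_right hηM0 (by linarith [ht.1])
  have h10 : (-γ + γ / 4) * (t - T) + γ / 4 * (t - T) = -(γ / 2) * (t - T) := by ring
  linarith

lemma stay_in_B {F : X → Set X} {C : Set X}
    (hosc : OuterSemicontinuousRel F C) (hlb : LocallyBoundedRel F C) (hC : IsClosed C)
    {V : X → ℝ} (hV : ContDiff ℝ 1 V) {γ : ℝ} (hγ : 0 < γ)
    {O : Set X} (hOcomp : IsCompact O) {β : ℝ}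
    (hb : ∀ s ∈ ((O \ interior {s ∈ O | V s ≤ β}) ∩ C), ∀ f ∈ F s, ⟪gradient V s, f⟫ ≤ -γ)
    (hd : ∀ s ∈ frontier O, β < V s)
    {ψ ψ' : ℝ → X} {c d : ℝ} (hcd : c ≤ d)
    (hAC : ∀ a b : ℝ, a ≤ b → Icc a b ⊆ Icc c d → IsACDeriv ψ ψ' a b)
    (hae : ∀ᵐ t ∂volume.restrict (Icc c d), ψ t ∈ C ∧ ψ' t ∈ F (ψ t))
    {t0 : ℝ} (ht0 : t0 ∈ Icc c d) (hψt0 : ψ t0 ∈ {s ∈ O | V s ≤ β}) :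
    ψ d ∈ {s ∈ O | V s ≤ β} := by
  set B := {s ∈ O | V s ≤ β} with hBdef
  have hBclosed : IsClosed B := by
    have hBeq : B = O ∩ V ⁻¹' (Iic β) := by
      ext z; simp [hBdef]
    rw [hBeq]
    exact hOcomp.isClosed.inter (isClosed_Iic.preimage hV.continuous)
  have hBintO : B ⊆ interior O := by
    intro z hz
    by_contra hzint
    have hfr : z ∈ frontier O := by
      rw [hOcomp.isClosed.frontier_eq]; exact ⟨hz.1, hzint⟩
    exact absurd hz.2 (not_le.2 (hd z hfr))
  rcases eq_or_lt_of_le hcd with heq | hcd'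
  · have ht0d : t0 = d := le_antisymm ht0.2 (heq ▸ ht0.1)
    rwa [← ht0d]
  have hcont : ContinuousOn ψ (Icc c d) := contOn_of_acderiv hcd (hAC c d hcd subset_rfl)
  set Z := {t ∈ Icc c d | ψ t ∈ B} with hZdef
  have hZclosed : IsClosed Z := hcont.preimage_isClosed_of_isClosed isClosed_Icc hBclosed
  set Tset := {t ∈ Icc t0 d | Icc t0 t ⊆ Z} with hTsetdef
  have ht0T : t0 ∈ Tset := by
    refine ⟨⟨le_rfl, ht0.2⟩, ?_⟩
    intro s hs
    have hst0 : s = t0 := le_antisymm hs.2 hs.1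
    rw [hst0]
    exact ⟨ht0, hψt0⟩
  have hbdd : BddAbove Tset := ⟨d, fun t htm => htm.1.2⟩
  have hne : Tset.Nonempty := ⟨t0, ht0T⟩
  set T := sSup Tset with hTdef
  have hT1 : t0 ≤ T := le_csSup hbdd ht0T
  have hT2 : T ≤ d := csSup_le hne fun t htm => htm.1.2
  have hlow : ∀ s, t0 ≤ s → s < T → s ∈ Z := by
    intro s h1 h2
    obtain ⟨t', ht', hst'⟩ := exists_lt_of_lt_csSup hne h2
    exact ht'.2 ⟨h1, hst'.le⟩
  have hTinZ : T ∈ Z := by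
    rcases eq_or_lt_of_le hT1 with h' | h'
    · rw [← h']; exact ⟨ht0, hψt0⟩
    · have hsubZ : Ico t0 T ⊆ Z := fun u hu => hlow u hu.1 hu.2
      have hscl : T ∈ closure (Ico t0 T) := by
        rw [closure_Ico h'.ne]
        exact ⟨hT1, le_rfl⟩
      exact hZclosed.closure_subset (closure_mono hsubZ hscl)
  have hTZ : Icc t0 T ⊆ Z := by
    intro s hs
    rcases eq_or_lt_of_le hs.2 with heq2 | hlt
    · rw [heq2]; exact hTinZ
    · exact hlow s hs.1 hlt
  rcases eq_or_lt_of_le hT2 with hTd | hTd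
  · have := (hTZ ⟨hT1, le_rfl⟩).2
    rwa [hTd] at this
  exfalso
  have hψT : ψ T ∈ B := (hTZ ⟨hT1, le_rfl⟩).2
  have hTmem : T ∈ Icc c d := ⟨ht0.1.trans hT1, hT2⟩
  have hexit : ∀ e, T < e → e ≤ d → ∃ s, s ∈ Ioc T e ∧ ψ s ∉ B := by
    intro e he hed
    by_contra hno
    push_neg at hno
    have heT : e ∈ Tset := by
      refine ⟨⟨hT1.trans he.le, hed⟩, ?_⟩
      intro s hs
      rcases le_or_gt s T with h' | h'
      · exact hTZ ⟨hs.1, h'⟩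
      · exact ⟨⟨hTmem.1.trans h'.le, hs.2.trans hed⟩, hno s ⟨h', hs.2⟩⟩
    exact absurd (le_csSup hbdd heT) (not_le.2 he)
  by_cases hintB : ψ T ∈ interior B
  · obtain ⟨ε, hε, hball⟩ := Metric.isOpen_iff.1 isOpen_interior _ hintB
    obtain ⟨δ, hδ, hδ'⟩ := Metric.continuousWithinAt_iff.1 (hcont T hTmem) ε hε
    obtain ⟨s, hs, hsB⟩ := hexit (min (T + δ / 2) d) (lt_min (by linarith) hTd)
      (min_le_right _ _)
    have hsd : s ≤ d := hs.2.trans (min_le_right _ _)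
    have hdist : dist s T < δ := by
      rw [Real.dist_eq, abs_sub_lt_iff]
      constructor
      · have := hs.2.trans (min_le_left _ _); linarith
      · linarith [hs.1]
    have : ψ s ∈ interior B :=
      hball (Metric.mem_ball.2 (hδ' ⟨hTmem.1.trans hs.1.le, hsd⟩ hdist))
    exact hsB (interior_subset this)
  · have hTC : ψ T ∈ C :=
      mem_of_ae_mem hC hcd' hcont (hae.mono fun t ht => ht.1) T hTmem
    have hFxT : ∀ f ∈ F (ψ T), ⟪gradient V (ψ T), f⟫ ≤ -γ :=
      hb (ψ T) ⟨⟨hψT.1, hintB⟩, hTC⟩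
    have hACT : ∀ a b : ℝ, a ≤ b → Icc a b ⊆ Icc T d → IsACDeriv ψ ψ' a b :=
      fun a b hab hsub => hAC a b hab (hsub.trans (Icc_subset_Icc hTmem.1 le_rfl))
    have haeT : ∀ᵐ t ∂volume.restrict (Icc T d), ψ t ∈ C ∧ ψ' t ∈ F (ψ t) :=
      ae_restrict_of_ae_restrict_of_subset (Icc_subset_Icc hTmem.1 le_rfl) hae
    obtain ⟨e, he, hdec⟩ := loc_decrease hosc hlb hV hγ hTd hACT haeT hTC hFxT
    have hTintO : ψ T ∈ interior O := hBintO hψT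
    obtain ⟨ε₂, hε₂, hball₂⟩ := Metric.isOpen_iff.1 isOpen_interior _ hTintO
    obtain ⟨δ₂, hδ₂, hδ₂'⟩ := Metric.continuousWithinAt_iff.1 (hcont T hTmem) ε₂ hε₂
    set e₃ := min e (min (T + δ₂ / 2) d) with he₃def
    have he₃T : T < e₃ := lt_min he.1 (lt_min (by linarith) hTd)
    have he₃d : e₃ ≤ d := (min_le_right _ _).trans (min_le_right _ _)
    obtain ⟨s, hs, hsB⟩ := hexit e₃ he₃T he₃d
    have hsd : s ≤ d := hs.2.trans he₃d
    have hdist₂ : dist s T < δ₂ := by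
      rw [Real.dist_eq, abs_sub_lt_iff]
      constructor
      · have h1 : e₃ ≤ T + δ₂ / 2 := (min_le_right _ _).trans (min_le_left _ _)
        have := hs.2
        linarith
      · linarith [hs.1]
    have hsO : ψ s ∈ O :=
      interior_subset (hball₂ (Metric.mem_ball.2 (hδ₂' ⟨hTmem.1.trans hs.1.le, hsd⟩ hdist₂)))
    have hsV : V (ψ s) ≤ β := by
      have hde := hdec s ⟨hs.1.le, hs.2.trans (min_le_left _ _)⟩
      have hVT : V (ψ T) ≤ β := hψT.2
      have hpos : 0 ≤ γ / 2 * (s - T) := by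
        have : (0:ℝ) ≤ s - T := by linarith [hs.1]
        positivity
      linarith
    exact hsB ⟨hsO, hsV⟩

lemma flow_segment {F : X → Set X} {C D : Set X}
    (hosc : OuterSemicontinuousRel F C) (hlb : LocallyBoundedRel F C) (hC : IsClosed C)
    {V : X → ℝ} (hV : ContDiff ℝ 1 V) {γ : ℝ} (hγ : 0 < γ)
    {S O : Set X} (hScomp : IsCompact S) (hOcomp : IsCompact O) {β : ℝ}
    (hfrS : ∀ s ∈ frontier S, 0 < V s)
    (hivA : ∀ s ∈ ({s ∈ S | V s ≤ 0} \ O) ∩ C, ∀ f ∈ F s, ⟪gradient V s, f⟫ ≤ -γ)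
    (hb : ∀ s ∈ ((O \ interior {s ∈ O | V s ≤ β}) ∩ C), ∀ f ∈ F s, ⟪gradient V s, f⟫ ≤ -γ)
    (hd : ∀ s ∈ frontier O, β < V s)
    (hBD : {s ∈ O | V s ≤ β} ∩ D = ∅)
    {ψ ψ' : ℝ → X} {c d : ℝ} (hcd : c ≤ d)
    (hAC : ∀ a b : ℝ, a ≤ b → Icc a b ⊆ Icc c d → IsACDeriv ψ ψ' a b)
    (hae : ∀ᵐ t ∂volume.restrict (Icc c d), ψ t ∈ C ∧ ψ' t ∈ F (ψ t))
    (hstart : ψ c ∈ S ∧ V (ψ c) ≤ 0) (hend : ψ d ∈ D) :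
    ψ d ∈ S ∧ V (ψ d) ≤ V (ψ c) := by
  rcases eq_or_lt_of_le hcd with heq | hcd'
  · rw [← heq]; exact ⟨hstart.1, le_rfl⟩
  have hcont : ContinuousOn ψ (Icc c d) := contOn_of_acderiv hcd (hAC c d hcd subset_rfl)
  have hnoB : ∀ t ∈ Icc c d, ψ t ∉ {s ∈ O | V s ≤ β} := by
    intro t ht htB
    have hB := stay_in_B hosc hlb hC hV hγ hOcomp hb hd hcd hAC hae ht htB
    exact eq_empty_iff_forall_notMem.1 hBD (ψ d) ⟨hB, hend⟩
  set A := {s ∈ S | V s ≤ 0} with hAdef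
  have hAclosed : IsClosed A := by
    have hAeq : A = S ∩ V ⁻¹' (Iic 0) := by ext z; simp [hAdef]
    rw [hAeq]
    exact hScomp.isClosed.inter (isClosed_Iic.preimage hV.continuous)
  set Z := {t ∈ Icc c d | ψ t ∈ A ∧ V (ψ t) ≤ V (ψ c)} with hZdef
  have hZclosed : IsClosed Z := by
    have hZeq : Z = {t ∈ Icc c d | ψ t ∈ A ∩ V ⁻¹' (Iic (V (ψ c)))} := by
      ext z; simp [hZdef]
    rw [hZeq]
    exact hcont.preimage_isClosed_of_isClosed isClosed_Icc
      (hAclosed.inter (isClosed_Iic.preimage hV.continuous))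
  set Tset := {t ∈ Icc c d | Icc c t ⊆ Z} with hTsetdef
  have hc0 : c ∈ Z := ⟨left_mem_Icc.2 hcd, ⟨hstart.1, hstart.2⟩, le_rfl⟩
  have hcT : c ∈ Tset := by
    refine ⟨left_mem_Icc.2 hcd, ?_⟩
    intro s hs
    have : s = c := le_antisymm hs.2 hs.1
    rw [this]; exact hc0
  have hbdd : BddAbove Tset := ⟨d, fun t htm => htm.1.2⟩
  have hne : Tset.Nonempty := ⟨c, hcT⟩
  set T := sSup Tset with hTdef
  have hT1 : c ≤ T := le_csSup hbdd hcT
  have hT2 : T ≤ d := csSup_le hne fun t htm => htm.1.2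
  have hTmem : T ∈ Icc c d := ⟨hT1, hT2⟩
  have hlow : ∀ s, c ≤ s → s < T → s ∈ Z := by
    intro s h1 h2
    obtain ⟨t', ht', hst'⟩ := exists_lt_of_lt_csSup hne h2
    exact ht'.2 ⟨h1, hst'.le⟩
  have hTinZ : T ∈ Z := by
    rcases eq_or_lt_of_le hT1 with h' | h'
    · rw [← h']; exact hc0
    · have hsubZ : Ico c T ⊆ Z := fun u hu => hlow u hu.1 hu.2
      have hscl : T ∈ closure (Ico c T) := by
        rw [closure_Ico h'.ne]
        exact ⟨hT1, le_rfl⟩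
      exact hZclosed.closure_subset (closure_mono hsubZ hscl)
  have hTZ : Icc c T ⊆ Z := by
    intro s hs
    rcases eq_or_lt_of_le hs.2 with heq2 | hlt
    · rw [heq2]; exact hTinZ
    · exact hlow s hs.1 hlt
  rcases eq_or_lt_of_le hT2 with hTd | hTd
  · have := hTinZ
    rw [hTd] at this
    exact ⟨this.2.1.1, this.2.2⟩
  exfalso
  have hψT : ψ T ∈ A := hTinZ.2.1
  have hVT : V (ψ T) ≤ V (ψ c) := hTinZ.2.2
  have hTC : ψ T ∈ C :=
    mem_of_ae_mem hC hcd' hcont (hae.mono fun t ht => ht.1) T hTmem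
  have hFxT : ∀ f ∈ F (ψ T), ⟪gradient V (ψ T), f⟫ ≤ -γ := by
    by_cases hO : ψ T ∈ O
    · refine hb (ψ T) ⟨⟨hO, fun hintB => ?_⟩, hTC⟩
      exact hnoB T hTmem (interior_subset hintB)
    · exact hivA (ψ T) ⟨⟨hψT, hO⟩, hTC⟩
  have hACT : ∀ a b : ℝ, a ≤ b → Icc a b ⊆ Icc T d → IsACDeriv ψ ψ' a b :=
    fun a b hab hsub => hAC a b hab (hsub.trans (Icc_subset_Icc hTmem.1 le_rfl))
  have haeT : ∀ᵐ t ∂volume.restrict (Icc T d), ψ t ∈ C ∧ ψ' t ∈ F (ψ t) :=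
    ae_restrict_of_ae_restrict_of_subset (Icc_subset_Icc hTmem.1 le_rfl) hae
  obtain ⟨e, he, hdec⟩ := loc_decrease hosc hlb hV hγ hTd hACT haeT hTC hFxT
  have hTS : ψ T ∈ S := hψT.1
  have hTintS : ψ T ∈ interior S := by
    by_contra h
    have hfr : ψ T ∈ frontier S := by
      rw [hScomp.isClosed.frontier_eq]; exact ⟨hTS, h⟩
    have := hfrS _ hfr
    have := hψT.2
    linarith
  obtain ⟨ε₂, hε₂, hball₂⟩ := Metric.isOpen_iff.1 isOpen_interior _ hTintS
  obtain ⟨δ₂, hδ₂, hδ₂'⟩ := Metric.continuousWithinAt_iff.1 (hcont T hTmem) ε₂ hε₂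
  set e₃ := min e (min (T + δ₂ / 2) d) with he₃def
  have he₃T : T < e₃ := lt_min he.1 (lt_min (by linarith) hTd)
  have he₃d : e₃ ≤ d := (min_le_right _ _).trans (min_le_right _ _)
  have he₃mem : e₃ ∈ Tset := by
    refine ⟨⟨hT1.trans he₃T.le, he₃d⟩, ?_⟩
    intro s hs
    rcases le_or_gt s T with h' | h'
    · exact hTZ ⟨hs.1, h'⟩
    · have hsd : s ≤ d := hs.2.trans he₃d
      have hsIcc : s ∈ Icc c d := ⟨hs.1, hsd⟩
      have hde := hdec s ⟨h'.le, hs.2.trans (min_le_left _ _)⟩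
      have hpos : 0 ≤ γ / 2 * (s - T) := by
        have : (0:ℝ) ≤ s - T := by linarith
        positivity
      have hVs : V (ψ s) ≤ V (ψ c) := by linarith
      have hVs0 : V (ψ s) ≤ 0 := hVs.trans hstart.2
      have hdist₂ : dist s T < δ₂ := by
        rw [Real.dist_eq, abs_sub_lt_iff]
        constructor
        · have h1 : e₃ ≤ T + δ₂ / 2 := (min_le_right _ _).trans (min_le_left _ _)
          have := hs.2
          linarith
        · linarith
      have hsS : ψ s ∈ S :=
        interior_subset (hball₂ (Metric.mem_ball.2 (hδ₂' hsIcc hdist₂)))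
      exact ⟨hsIcc, ⟨hsS, hVs0⟩, hVs⟩
  exact absurd (le_csSup hbdd he₃mem) (not_le.2 he₃T)

end ZenoAux

/-- **Corollary (Zeno-free solutions).** Under the reach-and-stay-while-stay hypotheses,
if moreover `B ∩ D = ∅`, every maximal solution starting in `I` is non-Zeno, i.e. it is
not both complete (unbounded domain) and of finite total flow time. -/
theorem zeno_free
    {n : ℕ} (H : HybridSystem (EuclideanSpace ℝ (Fin n)))
    (hbasic : HybridBasicConditions H)
    (S I O : Set (EuclideanSpace ℝ (Fin n)))
    (hScomp : IsCompact S) (hIcomp : IsCompact I) (hOcomp : IsCompact O)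
    (hSCD : S ⊆ H.C ∪ H.D) (hIS : I ⊆ interior S) (hOS : O ⊆ interior S)
    (hOint : (interior O).Nonempty)
    (V : EuclideanSpace ℝ (Fin n) → ℝ) (hV : ContDiff ℝ 1 V)
    (γc γd : ℝ) (hLBF : IsLBFWith H S I O V γc γd)
    (β : ℝ)
    (ha : ∀ s ∈ ((O \ interior {s ∈ O | V s ≤ β}) ∩ H.D), H.G s ⊆ S)
    (hb : ∀ s ∈ ((O \ interior {s ∈ O | V s ≤ β}) ∩ H.C), ∀ f ∈ H.F s,
      ⟪gradient V s, f⟫ ≤ -γc)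
    (hc : ∀ s ∈ ((O \ interior {s ∈ O | V s ≤ β}) ∩ H.D), ∀ g ∈ H.G s, V g - V s ≤ -γd)
    (hd : ∀ s ∈ frontier O, β < V s)
    (he : ∀ s ∈ ({s ∈ O | V s ≤ β} ∩ H.D), H.G s ⊆ {s ∈ O | V s ≤ β})
    (hBD : {s ∈ O | V s ≤ β} ∩ H.D = ∅)
    (E : Set (ℝ × ℕ)) (φ : ℝ → ℕ → EuclideanSpace ℝ (Fin n))
    (hφ : MaximalSolution H E φ) (hinit : φ 0 0 ∈ I) :
    ¬ ((¬ ∃ T : ℝ, ∃ J : ℕ, ∀ p ∈ E, p.1 ≤ T ∧ p.2 ≤ J) ∧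
        BddAbove {t : ℝ | ∃ j : ℕ, (t, j) ∈ E}) := by
  rintro ⟨hnb, hbdd⟩
  obtain ⟨hsol, -⟩ := hφ
  obtain ⟨hdom, hE00, -, hflow, hjmp⟩ := hsol
  obtain ⟨hγc, hγd, hI0, hfrS, hGS, hflowA, hjumpA⟩ := hLBF
  obtain ⟨hCclosed, hDclosed, hosc, hlb, hFne, hFcvx, hoscG, hlbG, hGne⟩ := hbasic
  obtain ⟨M, hM⟩ := hbdd
  have hSne : S.Nonempty := ⟨φ 0 0, interior_subset (hIS hinit)⟩
  obtain ⟨z, hzS, hz⟩ := hScomp.exists_isMinOn hSne hV.continuous.continuousOn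
  set m := V z with hmdef
  obtain ⟨N, hN⟩ := exists_nat_gt ((-m) / γd)
  push_neg at hnb
  obtain ⟨p, hp, hpbad⟩ := hnb M N
  have hmemt : p.1 ∈ {t : ℝ | ∃ j : ℕ, (t, j) ∈ E} := by exact ⟨p.2, hp⟩
  have hpM : p.1 ≤ M := hM hmemt
  have hpN : N < p.2 := hpbad hpM
  obtain ⟨J'', τ, hτ0, hτmono, hEeq⟩ := hdom.2 p.1 p.2 hp
  have hpmem : (p.1, p.2) ∈ E ∩ Set.Icc 0 p.1 ×ˢ {j : ℕ | j ≤ p.2} :=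
    ⟨hp, ⟨⟨hdom.1 p hp, le_rfl⟩, by simp⟩⟩
  rw [hEeq] at hpmem
  simp only [mem_iUnion, Finset.mem_range] at hpmem
  obtain ⟨j0, hj0J, hj0mem⟩ := hpmem
  have hpJ : p.2 < J'' := by
    have : p.2 = j0 := hj0mem.2
    rwa [this]
  have hpiece : ∀ j < J'', ∀ t ∈ Set.Icc (τ j) (τ (j + 1)), (t, j) ∈ E := by
    intro j hj t htm
    have hmem : (t, j) ∈ ⋃ i ∈ Finset.range J'',
        Set.Icc (τ i) (τ (i + 1)) ×ˢ ({i} : Set ℕ) :=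
      mem_iUnion₂.2 ⟨j, Finset.mem_range.2 hj, ⟨htm, rfl⟩⟩
    rw [← hEeq] at hmem
    exact hmem.1
  have hjumppt : ∀ j, j + 1 ≤ p.2 → (τ (j + 1), j) ∈ E ∧ (τ (j + 1), j + 1) ∈ E := by
    intro j hj
    have hj1 : j < J'' := lt_of_le_of_lt (le_trans (Nat.le_succ j) hj) hpJ
    have hj2 : j + 1 < J'' := lt_of_le_of_lt hj hpJ
    exact ⟨hpiece j hj1 _ ⟨hτmono j hj1, le_rfl⟩,
      hpiece (j + 1) hj2 _ ⟨le_rfl, hτmono (j + 1) hj2⟩⟩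
  have hkey : ∀ j, j ≤ p.2 → φ (τ j) j ∈ S ∧ V (φ (τ j) j) ≤ -(j : ℝ) * γd := by
    intro j
    induction j with
    | zero =>
      intro _
      constructor
      · rw [hτ0]; exact interior_subset (hIS hinit)
      · rw [hτ0]; simpa using hI0 _ hinit
    | succ j ih =>
      intro hj1
      obtain ⟨hxS, hxV⟩ := ih (le_trans (Nat.le_succ j) hj1)
      obtain ⟨φ', hACj, haej⟩ := hflow j
      have hjJ : j < J'' := lt_of_le_of_lt (le_trans (Nat.le_succ j) hj1) hpJ
      have hcd : τ j ≤ τ (j + 1) := hτmono j hjJ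
      have hIccE : Set.Icc (τ j) (τ (j + 1)) ⊆ {t | (t, j) ∈ E} :=
        fun t ht => hpiece j hjJ t ht
      have hACj' : ∀ a b : ℝ, a ≤ b → Set.Icc a b ⊆ Set.Icc (τ j) (τ (j + 1)) →
          IsACDeriv (fun t => φ t j) φ' a b :=
        fun a b hab hsub => hACj a b hab (hsub.trans hIccE)
      have haej' : ∀ᵐ t ∂volume.restrict (Set.Icc (τ j) (τ (j + 1))),
          φ t j ∈ H.C ∧ φ' t ∈ H.F (φ t j) :=
        ae_restrict_of_ae_restrict_of_subset hIccE haej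
      have hjump1 := hjumppt j hj1
      have hjc := hjmp (τ (j + 1)) j hjump1.1 hjump1.2
      have hjγd : (0:ℝ) ≤ (j : ℝ) * γd := by positivity
      have hseg := flow_segment hosc hlb hCclosed hV hγc hScomp hOcomp hfrS hflowA hb hd
        hBD hcd hACj' haej' ⟨hxS, by linarith⟩ hjc.1
      have hyV0 : V (φ (τ (j + 1)) j) ≤ -(j:ℝ) * γd := hseg.2.trans hxV
      have hynB : φ (τ (j + 1)) j ∉ {s ∈ O | V s ≤ β} :=
        fun hyB => eq_empty_iff_forall_notMem.1 hBD _ ⟨hyB, hjc.1⟩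
      have hg := hjc.2
      have hgSV : φ (τ (j + 1)) (j + 1) ∈ S ∧
          V (φ (τ (j + 1)) (j + 1)) - V (φ (τ (j + 1)) j) ≤ -γd := by
        by_cases hO : φ (τ (j + 1)) j ∈ O
        · have hyO : φ (τ (j + 1)) j ∈ (O \ interior {s ∈ O | V s ≤ β}) ∩ H.D :=
            ⟨⟨hO, fun hi => hynB (interior_subset hi)⟩, hjc.1⟩
          exact ⟨ha _ hyO hg, hc _ hyO _ hg⟩
        · have hyA' : φ (τ (j + 1)) j ∈ ({s ∈ S | V s ≤ 0} \ O) ∩ H.D :=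
            ⟨⟨⟨hseg.1, by linarith⟩, hO⟩, hjc.1⟩
          exact ⟨hGS _ hyA' hg, hjumpA _ hyA' _ hg⟩
      refine ⟨hgSV.1, ?_⟩
      push_cast
      linarith [hgSV.2]
  obtain ⟨hS2, hV2⟩ := hkey p.2 le_rfl
  have hmle : m ≤ V (φ (τ p.2) p.2) := isMinOn_iff.1 hz _ hS2
  have hNp : (N : ℝ) ≤ (p.2 : ℝ) := by exact_mod_cast hpN.le
  have h4 : -m < (N : ℝ) * γd := by
    rw [div_lt_iff₀ hγd] at hN
    linarith
  nlinarith
end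
end

section
/- Let H = (C,F,D,G) be a hybrid system on ℝⁿ, V : ℝⁿ → ℝ of class C¹, γ_c, γ_d > 0, and K ⊆ ℝⁿ such that ⟨∇V(s), f⟩ ≤ −γ_c for all s ∈ K ∩ C and all f ∈ F(s), and V(g) − V(s) ≤ −γ_d for all s ∈ K ∩ D and all g ∈ G(s). If φ : E → ℝⁿ is a solution of H with φ(t,j) ∈ K for all (t,j) ∈ E, then V(φ(t,j)) ≤ V(φ(0,0)) − γ_c·t − γ_d·j for all (t,j) ∈ E. -/
open Set MeasureTheory Filter Topology RealInnerProductSpace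

noncomputable section

lemma flow_decrease {n : ℕ} {V : EuclideanSpace ℝ (Fin n) → ℝ} (hV : ContDiff ℝ 1 V)
    {γc : ℝ} {φ φ' : ℝ → EuclideanSpace ℝ (Fin n)} {a b : ℝ} (hab : a ≤ b)
    (hAC : IsACDeriv φ φ' a b)
    (hae : ∀ᵐ s ∂(volume.restrict (Set.Icc a b)), ⟪gradient V (φ s), φ' s⟫ ≤ -γc) :
    V (φ b) ≤ V (φ a) - γc * (b - a) := by
  obtain ⟨hInt, hrep⟩ := hAC
  have hVd : Differentiable ℝ V := hV.differentiable one_ne_zero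
  -- continuity of φ on Icc a b
  have hφcont : ContinuousOn φ (Set.Icc a b) := by
    have h1 : ContinuousOn (fun t => φ a + ∫ s in a..t, φ' s) (Set.Icc a b) := by
      apply continuousOn_const.add
      have := intervalIntegral.continuousOn_primitive_interval'
        hInt Set.left_mem_uIcc
      rwa [Set.uIcc_of_le hab] at this
    exact h1.congr hrep
  set Kc : Set (EuclideanSpace ℝ (Fin n)) := φ '' Set.Icc a b with hKc
  have hKccomp : IsCompact Kc := isCompact_Icc.image_of_continuousOn hφcont
  set K2 : Set (EuclideanSpace ℝ (Fin n)) := Metric.cthickening 1 Kc with hK2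
  have hK2comp : IsCompact K2 := hKccomp.cthickening
  have hKsub : Kc ⊆ K2 := Metric.self_subset_cthickening _
  have hf'cont : Continuous (fderiv ℝ V) := hV.continuous_fderiv one_ne_zero
  obtain ⟨M, hM⟩ := hK2comp.exists_bound_of_continuousOn hf'cont.continuousOn
  set M' : ℝ := max M 0 with hM'
  have hM'0 : 0 ≤ M' := le_max_right _ _
  have hMbound : ∀ x ∈ K2, ‖fderiv ℝ V x‖ ≤ M' := fun x hx => (hM x hx).trans (le_max_left _ _)
  set I : ℝ := ∫ s in a..b, ‖φ' s‖ with hI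
  have hI0 : 0 ≤ I := intervalIntegral.integral_nonneg hab (fun _ _ => norm_nonneg _)
  have hUC := hK2comp.uniformContinuousOn_of_continuous hf'cont.continuousOn
  rw [Metric.uniformContinuousOn_iff_le] at hUC
  have key : ∀ ε > (0:ℝ), V (φ b) ≤ V (φ a) - γc * (b - a) + ε := by
    intro ε hε
    set εg : ℝ := min (ε / (2 * (I + 1))) 1 with hεg
    have hεg0 : 0 < εg := lt_min (by positivity) one_pos
    obtain ⟨δ, hδ0, hδ⟩ := hUC εg hεg0
    set ε' : ℝ := min δ (min 1 (ε / (2 * (2 * M' + 1)))) with hε'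
    have hε'0 : 0 < ε' := lt_min hδ0 (lt_min one_pos (by positivity))
    have hε'δ : ε' ≤ δ := min_le_left _ _
    have hε'1 : ε' ≤ 1 := (min_le_right _ _).trans (min_le_left _ _)
    -- approximate φ' by a continuous function
    have hIoc : IntegrableOn φ' (Set.Ioc a b) :=
      (intervalIntegrable_iff_integrableOn_Ioc_of_le hab).mp hInt
    have hind : Integrable ((Set.Ioc a b).indicator φ') :=
      (integrable_indicator_iff measurableSet_Ioc).mpr hIoc
    obtain ⟨h, hhcs, hhint, hhcont, hhinteg⟩ :=
      hind.exists_hasCompactSupport_integral_sub_le hε'0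
    have hdiffint : IntervalIntegrable (fun s => φ' s - h s) volume a b :=
      hInt.sub (hhcont.intervalIntegrable a b)
    have happrox : (∫ s in a..b, ‖φ' s - h s‖) ≤ ε' := by
      rw [intervalIntegral.integral_of_le hab]
      have heq : ∀ᵐ s ∂(volume.restrict (Set.Ioc a b)),
          ‖φ' s - h s‖ = ‖(Set.Ioc a b).indicator φ' s - h s‖ := by
        filter_upwards [ae_restrict_mem measurableSet_Ioc] with s hs
        rw [Set.indicator_of_mem hs]
      calc (∫ s in Set.Ioc a b, ‖φ' s - h s‖)
          = ∫ s in Set.Ioc a b, ‖(Set.Ioc a b).indicator φ' s - h s‖ := integral_congr_ae heq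
        _ ≤ ∫ s, ‖(Set.Ioc a b).indicator φ' s - h s‖ :=
            setIntegral_le_integral ((hind.sub hhinteg).norm)
              (Eventually.of_forall fun s => norm_nonneg _)
        _ ≤ ε' := hhint
    set w : ℝ → EuclideanSpace ℝ (Fin n) := fun t => φ a + ∫ s in a..t, h s with hw
    have hwderiv : ∀ t, HasDerivAt w (h t) t := fun t =>
      ((hhcont.integral_hasStrictDerivAt a t).hasDerivAt).const_add (φ a)
    have hwa : w a = φ a := by simp [hw]
    have hwcont : Continuous w := by
      exact continuous_iff_continuousAt.mpr fun t => (hwderiv t).continuousAt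
    -- closeness
    have hclose : ∀ t ∈ Set.Icc a b, ‖w t - φ t‖ ≤ ε' := by
      intro t ht
      rw [hrep t ht]
      have hsub' : IntervalIntegrable φ' volume a t :=
        hInt.mono_set (by rw [Set.uIcc_of_le ht.1, Set.uIcc_of_le hab]; exact Set.Icc_subset_Icc le_rfl ht.2)
      have : w t - (φ a + ∫ s in a..t, φ' s) = ∫ s in a..t, (h s - φ' s) := by
        rw [intervalIntegral.integral_sub (hhcont.intervalIntegrable a t) hsub']
        simp [hw]
      rw [this]
      calc ‖∫ s in a..t, (h s - φ' s)‖ ≤ ∫ s in a..t, ‖h s - φ' s‖ :=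
            intervalIntegral.norm_integral_le_integral_norm ht.1
        _ = ∫ s in a..t, ‖φ' s - h s‖ := by simp_rw [norm_sub_rev]
        _ ≤ ∫ s in a..b, ‖φ' s - h s‖ := by
            refine intervalIntegral.integral_mono_interval le_rfl ht.1 ht.2
              (Eventually.of_forall fun s => norm_nonneg _) hdiffint.norm
        _ ≤ ε' := happrox
    have hwK2 : ∀ t ∈ Set.Icc a b, w t ∈ K2 := by
      intro t ht
      refine Metric.mem_cthickening_of_dist_le (w t) (φ t) 1 Kc ⟨t, ht, rfl⟩ ?_
      rw [dist_eq_norm]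
      exact (hclose t ht).trans hε'1
    -- FTC for V ∘ w
    have hderiv : ∀ t ∈ Set.uIcc a b, HasDerivAt (fun u => V (w u)) (fderiv ℝ V (w t) (h t)) t :=
      fun t _ => (hVd (w t)).hasFDerivAt.comp_hasDerivAt t (hwderiv t)
    have hcontintegrand : Continuous fun t => fderiv ℝ V (w t) (h t) :=
      (hf'cont.comp hwcont).clm_apply hhcont
    have hFTC : (∫ t in a..b, fderiv ℝ V (w t) (h t)) = V (w b) - V (w a) :=
      intervalIntegral.integral_eq_sub_of_hasDerivAt hderiv (hcontintegrand.intervalIntegrable a b)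
    -- pointwise a.e. bound
    have hptwise : ∀ᵐ s ∂(volume.restrict (Set.Icc a b)),
        fderiv ℝ V (w s) (h s) ≤ -γc + (εg * ‖h s‖ + M' * ‖φ' s - h s‖) := by
      filter_upwards [hae, ae_restrict_mem measurableSet_Icc] with s hs1 hs2
      have hgrad : fderiv ℝ V (φ s) (φ' s) ≤ -γc := by
        rw [gradient, InnerProductSpace.toDual_symm_apply] at hs1
        exact hs1
      have hφsK : φ s ∈ Kc := ⟨s, hs2, rfl⟩
      have hwsK : w s ∈ K2 := hwK2 s hs2
      have hdistf : ‖fderiv ℝ V (w s) - fderiv ℝ V (φ s)‖ ≤ εg := by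
        have := hδ (w s) hwsK (φ s) (hKsub hφsK)
          (by rw [dist_eq_norm]; exact (hclose s hs2).trans hε'δ)
        rwa [dist_eq_norm] at this
      have hMs : ‖fderiv ℝ V (φ s)‖ ≤ M' := hMbound _ (hKsub hφsK)
      have heq : fderiv ℝ V (w s) (h s) = fderiv ℝ V (φ s) (φ' s)
          + ((fderiv ℝ V (w s) - fderiv ℝ V (φ s)) (h s) + fderiv ℝ V (φ s) (h s - φ' s)) := by
        simp only [ContinuousLinearMap.sub_apply, map_sub]
        ring
      rw [heq]
      have hb1 : (fderiv ℝ V (w s) - fderiv ℝ V (φ s)) (h s) ≤ εg * ‖h s‖ :=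
        le_trans (le_trans (le_abs_self _) ((fderiv ℝ V (w s) - fderiv ℝ V (φ s)).le_opNorm (h s)))
          (mul_le_mul_of_nonneg_right hdistf (norm_nonneg _))
      have hb2 : fderiv ℝ V (φ s) (h s - φ' s) ≤ M' * ‖φ' s - h s‖ := by
        refine le_trans (le_trans (le_abs_self _) ((fderiv ℝ V (φ s)).le_opNorm (h s - φ' s))) ?_
        rw [norm_sub_rev]
        gcongr
      linarith
    -- integrate
    have hRHSint : IntervalIntegrable
        (fun s => -γc + (εg * ‖h s‖ + M' * ‖φ' s - h s‖)) volume a b := by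
      exact intervalIntegrable_const.add
        (((hhcont.norm.intervalIntegrable a b).const_mul εg).add (hdiffint.norm.const_mul M'))
    have hle : (∫ t in a..b, fderiv ℝ V (w t) (h t))
        ≤ ∫ s in a..b, (-γc + (εg * ‖h s‖ + M' * ‖φ' s - h s‖)) :=
      intervalIntegral.integral_mono_ae_restrict hab
        (hcontintegrand.intervalIntegrable a b) hRHSint hptwise
    have hnormh : (∫ s in a..b, ‖h s‖) ≤ I + ε' := by
      have h1 : (∫ s in a..b, ‖h s‖) ≤ ∫ s in a..b, (‖φ' s‖ + ‖φ' s - h s‖) := by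
        refine intervalIntegral.integral_mono_on hab (hhcont.norm.intervalIntegrable a b)
          (hInt.norm.add hdiffint.norm) fun s _ => ?_
        calc ‖h s‖ = ‖φ' s - (φ' s - h s)‖ := by congr 1; abel
          _ ≤ ‖φ' s‖ + ‖φ' s - h s‖ := norm_sub_le _ _
      rw [intervalIntegral.integral_add hInt.norm hdiffint.norm] at h1
      exact h1.trans (by linarith)
    have hRHS : (∫ s in a..b, (-γc + (εg * ‖h s‖ + M' * ‖φ' s - h s‖)))
        ≤ -γc * (b - a) + (εg * (I + ε') + M' * ε') := by
      rw [intervalIntegral.integral_add intervalIntegrable_const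
        (((hhcont.norm.intervalIntegrable a b).const_mul εg).add (hdiffint.norm.const_mul M')),
        intervalIntegral.integral_add ((hhcont.norm.intervalIntegrable a b).const_mul εg)
          (hdiffint.norm.const_mul M'),
        intervalIntegral.integral_const, intervalIntegral.integral_const_mul,
        intervalIntegral.integral_const_mul]
      simp only [smul_eq_mul]
      have t1 : εg * (∫ s in a..b, ‖h s‖) ≤ εg * (I + ε') :=
        mul_le_mul_of_nonneg_left hnormh hεg0.le
      have t2 : M' * (∫ s in a..b, ‖φ' s - h s‖) ≤ M' * ε' :=
        mul_le_mul_of_nonneg_left happrox hM'0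
      linarith
    -- endpoint correction via MVT
    have hendpoint : ‖V (φ b) - V (w b)‖ ≤ M' * ε' := by
      have hconv : Convex ℝ (Metric.closedBall (φ b) 1) := convex_closedBall _ _
      have hsubK2 : Metric.closedBall (φ b) 1 ⊆ K2 := fun x hx =>
        Metric.mem_cthickening_of_dist_le x (φ b) 1 Kc ⟨b, ⟨hab, le_rfl⟩, rfl⟩
          (Metric.mem_closedBall.mp hx)
      have hφbmem : φ b ∈ Metric.closedBall (φ b) 1 := Metric.mem_closedBall_self one_pos.le
      have hwbmem : w b ∈ Metric.closedBall (φ b) 1 := by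
        rw [Metric.mem_closedBall, dist_eq_norm]
        exact (hclose b ⟨hab, le_rfl⟩).trans hε'1
      have := hconv.norm_image_sub_le_of_norm_fderiv_le
        (fun x _ => hVd x) (fun x hx => hMbound x (hsubK2 hx))
        hwbmem hφbmem
      calc ‖V (φ b) - V (w b)‖ ≤ M' * ‖φ b - w b‖ := this
        _ ≤ M' * ε' := by
            rw [norm_sub_rev]
            exact mul_le_mul_of_nonneg_left (hclose b ⟨hab, le_rfl⟩) hM'0
    have hbnd : V (φ b) - V (w b) ≤ M' * ε' :=
      (le_abs_self _).trans (by rw [← Real.norm_eq_abs]; exact hendpoint)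
    have h1 : V (w b) - V (φ a) ≤ -γc * (b - a) + (εg * (I + ε') + M' * ε') := by
      rw [← hwa, ← hFTC]
      exact hle.trans hRHS
    have hεgle : εg * (I + ε') ≤ ε / 2 := by
      have h2 : εg ≤ ε / (2 * (I + 1)) := min_le_left _ _
      have h3 : I + ε' ≤ I + 1 := by linarith
      calc εg * (I + ε') ≤ (ε / (2 * (I + 1))) * (I + 1) := by
            apply mul_le_mul h2 h3 (by positivity) (by positivity)
        _ = ε / 2 := by field_simp
    have hM'le : M' * ε' + M' * ε' ≤ ε / 2 := by
      have h4 : ε' ≤ ε / (2 * (2 * M' + 1)) := (min_le_right _ _).trans (min_le_right _ _)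
      have h5 : M' * ε' ≤ M' * (ε / (2 * (2 * M' + 1))) := mul_le_mul_of_nonneg_left h4 hM'0
      have hpos : (0:ℝ) < 2 * M' + 1 := by linarith
      have h6 : M' * (ε / (2 * (2 * M' + 1))) ≤ ε / 4 := by
        rw [← mul_div_assoc, div_le_div_iff₀ (by positivity) (by norm_num : (0:ℝ) < 4)]
        nlinarith [hε.le, hM'0]
      linarith
    linarith
  -- conclude
  have := le_of_forall_pos_le_add key
  linarith

/-- Along any solution of `H` that remains in a set `K` on which `V` decreases at rate
`γ_c` during flow and by `γ_d` at jumps, one has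
`V(φ(t,j)) ≤ V(φ(0,0)) − γ_c·t − γ_d·j` on the whole domain. -/
theorem lbf_decrease_along_solution
    {n : ℕ} (H : HybridSystem (EuclideanSpace ℝ (Fin n)))
    (V : EuclideanSpace ℝ (Fin n) → ℝ) (hV : ContDiff ℝ 1 V)
    (γc γd : ℝ) (hγc : 0 < γc) (hγd : 0 < γd)
    (K : Set (EuclideanSpace ℝ (Fin n)))
    (hflow : ∀ s ∈ K ∩ H.C, ∀ f ∈ H.F s, ⟪gradient V s, f⟫ ≤ -γc)
    (hjump : ∀ s ∈ K ∩ H.D, ∀ g ∈ H.G s, V g - V s ≤ -γd)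
    (E : Set (ℝ × ℕ)) (φ : ℝ → ℕ → EuclideanSpace ℝ (Fin n))
    (hφ : HybridSolution H E φ)
    (hK : ∀ t : ℝ, ∀ j : ℕ, (t, j) ∈ E → φ t j ∈ K) :
    ∀ t : ℝ, ∀ j : ℕ, (t, j) ∈ E →
      V (φ t j) ≤ V (φ 0 0) - γc * t - γd * j := by
  obtain ⟨hE, hE00, _, hflowsol, hjumpsol⟩ := hφ
  have slice : ∀ (j : ℕ) (a b : ℝ), a ≤ b → Set.Icc a b ⊆ {t | (t, j) ∈ E} →
      V (φ b j) ≤ V (φ a j) - γc * (b - a) := by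
    intro j a b hab hsub
    obtain ⟨φ', hACj, haej⟩ := hflowsol j
    refine flow_decrease hV hab (hACj a b hab hsub) ?_
    have haeIcc : ∀ᵐ t ∂(volume.restrict (Set.Icc a b)), φ t j ∈ H.C ∧ φ' t ∈ H.F (φ t j) :=
      haej.filter_mono (ae_mono (Measure.restrict_mono hsub le_rfl))
    filter_upwards [haeIcc, ae_restrict_mem measurableSet_Icc] with s hs hsI
    exact hflow _ ⟨hK s j (hsub hsI), hs.1⟩ _ hs.2
  intro t j htj
  have ht0 : 0 ≤ t := hE.1 (t, j) htj
  obtain ⟨J, τ, hτ0, hτmono, hEeq⟩ := hE.2 t j htj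
  have hsubE : ∀ i < J, Set.Icc (τ i) (τ (i + 1)) ×ˢ ({i} : Set ℕ) ⊆ E := by
    intro i hi p hp
    have hpE : p ∈ E ∩ Set.Icc 0 t ×ˢ {j' : ℕ | j' ≤ j} := by
      rw [hEeq]
      exact Set.mem_biUnion (Finset.mem_range.mpr hi) hp
    exact hpE.1
  have htJ : j < J ∧ τ j ≤ t ∧ t ≤ τ (j + 1) := by
    have hmem : (t, j) ∈ E ∩ Set.Icc 0 t ×ˢ {j' : ℕ | j' ≤ j} :=
      ⟨htj, ⟨⟨ht0, le_rfl⟩, Set.mem_setOf_eq ▸ le_rfl⟩⟩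
    rw [hEeq] at hmem
    simp only [Set.mem_iUnion, Finset.mem_range, Set.mem_prod, Set.mem_Icc,
      Set.mem_singleton_iff, exists_prop] at hmem
    obtain ⟨i, hiJ, ⟨h1, h2⟩, h3⟩ := hmem
    subst h3
    exact ⟨hiJ, h1, h2⟩
  have hmemE : ∀ i ≤ j, ∀ s : ℝ, τ i ≤ s → s ≤ τ (i + 1) → (s, i) ∈ E := fun i hij s h1 h2 =>
    hsubE i (lt_of_le_of_lt hij htJ.1) ⟨⟨h1, h2⟩, rfl⟩
  have main : ∀ i ≤ j, V (φ (τ i) i) ≤ V (φ 0 0) - γc * τ i - γd * i := by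
    intro i
    induction i with
    | zero => intro _; rw [hτ0]; simp
    | succ i ih =>
      intro hij
      have hi_le : i ≤ j := Nat.le_of_succ_le hij
      have hii : τ i ≤ τ (i + 1) := hτmono i (lt_of_le_of_lt hi_le htJ.1)
      have hflow_i : V (φ (τ (i + 1)) i) ≤ V (φ (τ i) i) - γc * (τ (i + 1) - τ i) :=
        slice i _ _ hii (fun s hs => hmemE i hi_le s hs.1 hs.2)
      have hE1 : (τ (i + 1), i) ∈ E := hmemE i hi_le _ hii le_rfl
      have hE2 : (τ (i + 1), i + 1) ∈ E :=
        hmemE (i + 1) hij _ le_rfl (hτmono (i + 1) (lt_of_le_of_lt hij htJ.1))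
      obtain ⟨hD, hG⟩ := hjumpsol _ _ hE1 hE2
      have hjmp := hjump _ ⟨hK _ _ hE1, hD⟩ _ hG
      have hih := ih hi_le
      push_cast
      push_cast at hih
      linarith
  have hfinal := slice j (τ j) t htJ.2.1
    (fun s hs => hmemE j le_rfl s hs.1 (hs.2.trans htJ.2.2))
  have hmain := main j le_rfl
  linarith
end
end
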